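/- arXiv:2212.07520 — 3 statements merged into one kernel-verified Lean document; each statement's English description precedes it below -/
import Mathlib

section
/- For every m ≥ 1, all n, k, l ∈ ℕ and every r > 0 there exists a constant C = C(n,k,l) > 0 such that for every smooth function f on the closed ball B̄_r ⊂ ℝ^m that is flat at the origin, one has ⟨f⟩_{n,k+l,r} ≤ C · ⟨f⟩_{n+l,k,r}. -/
open Metric Set

/-- The weighted norm `⟨f⟩_{n,k,r}` on functions flat at the origin:
`sup_{x ∈ B̄_r, x ≠ 0} max_{|a| ≤ n} |x|^{-k} |D^a f(x)|`, implemented with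
iterated Fréchet derivatives within the closed ball. -/
noncomputable def flatNorm (m : ℕ) (r : ℝ) (n k : ℕ)
    (f : EuclideanSpace ℝ (Fin m) → ℝ) : ℝ :=
  ⨆ p : (closedBall (0 : EuclideanSpace ℝ (Fin m)) r \ {0} :
      Set (EuclideanSpace ℝ (Fin m))) × Fin (n + 1),
    ‖(p.1 : EuclideanSpace ℝ (Fin m))‖ ^ (-(k : ℤ)) *
      ‖iteratedFDerivWithin ℝ p.2 f (closedBall 0 r) p.1‖

/-- Mean-value step: if `D^{i+1} f` is bounded by `M‖y‖^j` on the ball and `D^i f 0 = 0`,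
then `D^i f` is bounded by `M‖x‖^{j+1}`. -/
lemma flat_mvt_step {m : ℕ} {r : ℝ} {f : EuclideanSpace ℝ (Fin m) → ℝ}
    {M : ℝ} (hM : 0 ≤ M) (i j : ℕ)
    (hf : ContDiffOn ℝ (⊤ : ℕ∞) f (closedBall 0 r))
    (uds : UniqueDiffOn ℝ (closedBall (0 : EuclideanSpace ℝ (Fin m)) r))
    (h0 : iteratedFDerivWithin ℝ i f (closedBall 0 r) 0 = 0)
    (hb : ∀ y ∈ closedBall (0 : EuclideanSpace ℝ (Fin m)) r,
      ‖iteratedFDerivWithin ℝ (i + 1) f (closedBall 0 r) y‖ ≤ M * ‖y‖ ^ j) :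
    ∀ x ∈ closedBall (0 : EuclideanSpace ℝ (Fin m)) r,
      ‖iteratedFDerivWithin ℝ i f (closedBall 0 r) x‖ ≤ M * ‖x‖ ^ (j + 1) := by
  intro x hx
  set s := closedBall (0 : EuclideanSpace ℝ (Fin m)) r with hs
  set g := iteratedFDerivWithin ℝ i f s with hg
  have hdiff : DifferentiableOn ℝ g s :=
    hf.differentiableOn_iteratedFDerivWithin (by exact_mod_cast WithTop.coe_lt_top i) uds
  have hxnorm : ‖x‖ ≤ r := by rw [hs, mem_closedBall_zero_iff] at hx; exact hx
  have hsub : closedBall (0 : EuclideanSpace ℝ (Fin m)) ‖x‖ ⊆ s :=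
    closedBall_subset_closedBall hxnorm
  have hx' : x ∈ closedBall (0 : EuclideanSpace ℝ (Fin m)) ‖x‖ := by
    simp [mem_closedBall_zero_iff]
  have h0' : (0 : EuclideanSpace ℝ (Fin m)) ∈ closedBall (0 : EuclideanSpace ℝ (Fin m)) ‖x‖ := by
    simp [mem_closedBall_zero_iff]
  have key := Convex.norm_image_sub_le_of_norm_hasFDerivWithin_le
    (f := g) (f' := fun y => fderivWithin ℝ g s y)
    (s := closedBall (0 : EuclideanSpace ℝ (Fin m)) ‖x‖) (C := M * ‖x‖ ^ j)
    (fun y hy => ((hdiff y (hsub hy)).hasFDerivWithinAt).mono hsub)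
    (fun y hy => by
      have hyx : ‖y‖ ≤ ‖x‖ := by simpa [mem_closedBall_zero_iff] using hy
      calc ‖fderivWithin ℝ g s y‖ = ‖iteratedFDerivWithin ℝ (i + 1) f s y‖ :=
            norm_fderivWithin_iteratedFDerivWithin
        _ ≤ M * ‖y‖ ^ j := hb y (hsub hy)
        _ ≤ M * ‖x‖ ^ j := by
            exact mul_le_mul_of_nonneg_left (pow_le_pow_left₀ (norm_nonneg _) hyx j) hM)
    (convex_closedBall _ _) h0' hx'
  have hg0 : g 0 = 0 := h0
  calc ‖g x‖ = ‖g x - g 0‖ := by rw [hg0, sub_zero]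
    _ ≤ (M * ‖x‖ ^ j) * ‖x - 0‖ := key
    _ = M * ‖x‖ ^ (j + 1) := by rw [sub_zero, pow_succ]; ring

/-- Iterated mean-value: if `D^{i+j} f` is bounded by `M‖y‖^{k0}` on the ball, then
`D^i f` is bounded by `M‖x‖^{k0+j}`. -/
lemma flat_iterate {m : ℕ} {r : ℝ} {f : EuclideanSpace ℝ (Fin m) → ℝ}
    {M : ℝ} (hM : 0 ≤ M)
    (hf : ContDiffOn ℝ (⊤ : ℕ∞) f (closedBall 0 r))
    (uds : UniqueDiffOn ℝ (closedBall (0 : EuclideanSpace ℝ (Fin m)) r))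
    (hflat : ∀ i : ℕ, iteratedFDerivWithin ℝ i f (closedBall 0 r) 0 = 0)
    (k0 : ℕ) :
    ∀ j i : ℕ, (∀ y ∈ closedBall (0 : EuclideanSpace ℝ (Fin m)) r,
        ‖iteratedFDerivWithin ℝ (i + j) f (closedBall 0 r) y‖ ≤ M * ‖y‖ ^ k0) →
      ∀ x ∈ closedBall (0 : EuclideanSpace ℝ (Fin m)) r,
        ‖iteratedFDerivWithin ℝ i f (closedBall 0 r) x‖ ≤ M * ‖x‖ ^ (k0 + j) := by
  intro j
  induction j with
  | zero => intro i h x hx; simpa using h x hx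
  | succ j ih =>
    intro i h x hx
    have h' : ∀ y ∈ closedBall (0 : EuclideanSpace ℝ (Fin m)) r,
        ‖iteratedFDerivWithin ℝ ((i + 1) + j) f (closedBall 0 r) y‖ ≤ M * ‖y‖ ^ k0 := by
      intro y hy
      have : (i + 1) + j = i + (j + 1) := by omega
      rw [this]; exact h y hy
    have h1 := ih (i + 1) h'
    have := flat_mvt_step hM i (k0 + j) hf uds (hflat i) (fun y hy => h1 y hy) x hx
    simpa [show k0 + (j + 1) = (k0 + j) + 1 from rfl] using this

/-- for all `m ≥ 1`, `n k l : ℕ` and `r > 0` there is `C > 0` such that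
every smooth function on `B̄_r` flat at the origin satisfies
`⟨f⟩_{n,k+l,r} ≤ C ⟨f⟩_{n+l,k,r}`. -/
theorem weight_shift_inequality :
    ∀ m : ℕ, 1 ≤ m → ∀ n k l : ℕ, ∀ r : ℝ, 0 < r →
      ∃ C > (0 : ℝ), ∀ f : EuclideanSpace ℝ (Fin m) → ℝ,
        ContDiffOn ℝ (⊤ : ℕ∞) f (closedBall 0 r) →
        (∀ i : ℕ, iteratedFDerivWithin ℝ i f (closedBall 0 r) 0 = 0) →
        flatNorm m r n (k + l) f ≤ C * flatNorm m r (n + l) k f := by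
  intro m _hm n k l r hr
  refine ⟨1, one_pos, ?_⟩
  intro f hf hflat
  set s := closedBall (0 : EuclideanSpace ℝ (Fin m)) r with hs
  have uds : UniqueDiffOn ℝ s := uniqueDiffOn_convex (convex_closedBall _ _)
    (by rw [interior_closedBall _ hr.ne']; exact nonempty_ball.mpr hr)
  -- uniform bounds on each derivative on the compact ball
  have hK : ∀ j : ℕ, ∃ K : ℝ, 0 ≤ K ∧ ∀ y ∈ s, ‖iteratedFDerivWithin ℝ j f s y‖ ≤ K := by
    intro j
    obtain ⟨K, hKb⟩ := IsCompact.exists_bound_of_continuousOn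
      (isCompact_closedBall (0 : EuclideanSpace ℝ (Fin m)) r)
      (hf.continuousOn_iteratedFDerivWithin (by exact_mod_cast le_top) uds)
    exact ⟨max K 0, le_max_right _ _, fun y hy => (hKb y hy).trans (le_max_left _ _)⟩
  choose K hK0 hKb using hK
  -- each derivative of order ≤ n + l decays like ‖x‖^k with constant K (j + k)
  have hdecay : ∀ j : ℕ, ∀ x ∈ s,
      ‖iteratedFDerivWithin ℝ j f s x‖ ≤ K (j + k) * ‖x‖ ^ k := by
    intro j x hx
    have h := flat_iterate (hK0 (j + k)) hf uds hflat 0 k j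
      (fun y hy => by simpa using hKb (j + k) y hy) x hx
    simpa using h
  -- the family defining flatNorm m r (n+l) k f
  set F : (closedBall (0 : EuclideanSpace ℝ (Fin m)) r \ {0} :
      Set (EuclideanSpace ℝ (Fin m))) × Fin (n + l + 1) → ℝ :=
    fun p => ‖(p.1 : EuclideanSpace ℝ (Fin m))‖ ^ (-(k : ℤ)) *
      ‖iteratedFDerivWithin ℝ p.2 f (closedBall 0 r) p.1‖ with hF
  have hbdd : BddAbove (Set.range F) := by
    refine ⟨∑ j : Fin (n + l + 1), K ((j : ℕ) + k), ?_⟩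
    rintro v ⟨p, rfl⟩
    obtain ⟨⟨x, hxs, hx0⟩, i⟩ := p
    have hx0' : x ≠ 0 := by simpa using hx0
    have hxpos : 0 < ‖x‖ := norm_pos_iff.mpr hx0'
    have h1 : ‖iteratedFDerivWithin ℝ (i : ℕ) f s x‖ ≤ K ((i : ℕ) + k) * ‖x‖ ^ k :=
      hdecay (i : ℕ) x hxs
    have h2 : F (⟨x, hxs, hx0⟩, i) ≤ K ((i : ℕ) + k) := by
      have hzpow : ‖x‖ ^ (-(k : ℤ)) = (‖x‖ ^ k)⁻¹ := by
        rw [zpow_neg, zpow_natCast]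
      simp only [hF]
      rw [hzpow]
      rw [inv_mul_le_iff₀ (pow_pos hxpos k)]
      exact h1.trans_eq (mul_comm _ _)
    refine h2.trans ?_
    exact Finset.single_le_sum (f := fun j : Fin (n + l + 1) => K ((j : ℕ) + k))
      (fun j _ => hK0 _) (Finset.mem_univ i)
  set M := flatNorm m r (n + l) k f with hM
  have hMnonneg : 0 ≤ M := by
    apply Real.iSup_nonneg
    intro p
    positivity
  -- each derivative of order ≤ n + l is bounded by M ‖y‖^k
  have hMb : ∀ j : ℕ, j ≤ n + l → ∀ y ∈ s,
      ‖iteratedFDerivWithin ℝ j f s y‖ ≤ M * ‖y‖ ^ k := by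
    intro j hj y hy
    rcases eq_or_ne y 0 with rfl | hy0
    · rw [hflat j]
      simp only [norm_zero]
      positivity
    · have hypos : 0 < ‖y‖ := norm_pos_iff.mpr hy0
      have hmem : y ∈ (closedBall (0 : EuclideanSpace ℝ (Fin m)) r \ {0} :
          Set (EuclideanSpace ℝ (Fin m))) := ⟨hy, by simpa using hy0⟩
      have hle : F (⟨y, hmem⟩, ⟨j, by omega⟩) ≤ M := le_ciSup hbdd _
      simp only [hF] at hle
      rw [zpow_neg, zpow_natCast, inv_mul_le_iff₀ (pow_pos hypos k), mul_comm] at hle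
      exact hle
  -- conclude
  rw [one_mul]
  apply Real.iSup_le _ hMnonneg
  rintro ⟨⟨x, hxs, hx0⟩, i⟩
  have hx0' : x ≠ 0 := by simpa using hx0
  have hxpos : 0 < ‖x‖ := norm_pos_iff.mpr hx0'
  have hkey : ‖iteratedFDerivWithin ℝ (i : ℕ) f s x‖ ≤ M * ‖x‖ ^ (k + l) := by
    apply flat_iterate hMnonneg hf uds hflat k l (i : ℕ) _ x hxs
    intro y hy
    exact hMb ((i : ℕ) + l) (by omega) y hy
  have : ((k + l : ℕ) : ℤ) = (k : ℤ) + l := by push_cast; ring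
  rw [zpow_neg, zpow_natCast, inv_mul_le_iff₀ (pow_pos hxpos (k + l))]
  exact hkey.trans_eq (mul_comm _ _)
end

section
/- For every m ≥ 1, all n, k ∈ ℕ and every r > 0 there exists a constant C = C(n,k) > 0 such that for every smooth function f on the closed ball B̄_r ⊂ ℝ^m that is flat at the origin, C^{-1} · |f|_{n,k,r} ≤ ⟨f⟩_{n,k,r} ≤ C · |f|_{n,k,r}; that is, the two families of weighted norms on flat functions are equivalent. -/
/-!
Let `g = ‖·‖^{-k} f` on the punctured ball. Since `‖·‖^e` is homogeneous of degree `e`, its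
`q`-th derivative is `O(‖x‖^{e-q})`, so the Leibniz rule for `g = ‖·‖^{-k} · f` and for
`f = ‖·‖^k · g` turns bounds `‖D^{i-q} f(x)‖ ≲ ‖x‖^{k+q}` and `‖D^{i-q} g(x)‖ ≲ ‖x‖^q` into the
two inequalities. Both kinds of bounds come from integrating a bound on the `i`-th derivative
`q` times along the segment to the origin, which is legitimate once the lower derivatives tend to
`0` at the origin: for `f` this is flatness, for `g` it follows from the Leibniz rule again, since
`f` vanishes to order `k + 1`.
-/

open Metric Set Filter Topology
open scoped ContDiff

/-- The norm `|f|_{n,k,r}`: the `C^n` norm (over the punctured closed ball) of the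
function `x ↦ |x|^{-k} f(x)`. -/
noncomputable def weightedCnNorm (m : ℕ) (r : ℝ) (n k : ℕ)
    (f : EuclideanSpace ℝ (Fin m) → ℝ) : ℝ :=
  ⨆ p : (closedBall (0 : EuclideanSpace ℝ (Fin m)) r \ {0} :
      Set (EuclideanSpace ℝ (Fin m))) × Fin (n + 1),
    ‖iteratedFDerivWithin ℝ p.2
      (fun y : EuclideanSpace ℝ (Fin m) => ‖y‖ ^ (-(k : ℤ)) * f y)
      (closedBall 0 r) p.1‖

theorem norm_iteratedFDerivWithin_mul_le_of_zpow {E A : Type*} [NormedAddCommGroup E]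
    [NormedSpace ℝ E] [NormedRing A] [NormedAlgebra ℝ A] {u v : E → A} {t : Set E} {i : ℕ}
    (hu : ContDiffOn ℝ i u t) (hv : ContDiffOn ℝ i v t) (ht : UniqueDiffOn ℝ t) {x : E}
    (hx : x ∈ t) (hx0 : x ≠ 0) {α β : ℤ} {a b : ℝ}
    (hu' : ∀ q ≤ i, ‖iteratedFDerivWithin ℝ q u t x‖ ≤ a * ‖x‖ ^ (α - q))
    (hv' : ∀ q ≤ i, ‖iteratedFDerivWithin ℝ (i - q) v t x‖ ≤ b * ‖x‖ ^ (β + q)) :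
    ‖iteratedFDerivWithin ℝ i (fun y => u y * v y) t x‖ ≤ 2 ^ i * a * b * ‖x‖ ^ (α + β) := by
  have hnx : ‖x‖ ≠ 0 := norm_ne_zero_iff.2 hx0
  calc _ ≤ ∑ q ∈ Finset.range (i + 1), (i.choose q : ℝ) * ‖iteratedFDerivWithin ℝ q u t x‖ *
        ‖iteratedFDerivWithin ℝ (i - q) v t x‖ :=
          norm_iteratedFDerivWithin_mul_le hu hv ht hx le_rfl
    _ ≤ ∑ q ∈ Finset.range (i + 1), (i.choose q : ℝ) * (a * b * ‖x‖ ^ (α + β)) := by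
      refine Finset.sum_le_sum fun q hq => ?_
      have hqi : q ≤ i := Nat.lt_succ_iff.1 (Finset.mem_range.1 hq)
      calc _ ≤ (i.choose q : ℝ) * (a * ‖x‖ ^ (α - q)) * (b * ‖x‖ ^ (β + q)) := by
            gcongr
            · exact mul_nonneg (Nat.cast_nonneg _) ((norm_nonneg _).trans (hu' q hqi))
            · exact hu' q hqi
            · exact hv' q hqi
        _ = (i.choose q : ℝ) * (a * b * ‖x‖ ^ (α + β)) := by
            have hpow : ‖x‖ ^ (α - q) * ‖x‖ ^ (β + q) = ‖x‖ ^ (α + β) := by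
              rw [← zpow_add₀ hnx]; ring_nf
            linear_combination (i.choose q : ℝ) * a * b * hpow
    _ = 2 ^ i * a * b * ‖x‖ ^ (α + β) := by
      rw [← Finset.sum_mul, ← Nat.cast_sum, Nat.sum_range_choose]; push_cast; ring

section Weight

variable {E : Type*} [NormedAddCommGroup E] [InnerProductSpace ℝ E]

theorem contDiffAt_norm_zpow {n : WithTop ℕ∞} (e : ℤ) {x : E} (hx : x ≠ 0) :
    ContDiffAt ℝ n (fun y : E => ‖y‖ ^ e) x := by
  simpa only [← Real.rpow_intCast] using
    (contDiffAt_norm ℝ hx).rpow_const_of_ne (norm_ne_zero_iff.2 hx)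

theorem norm_iteratedFDeriv_norm_zpow_smul (e : ℤ) (q : ℕ) {c : ℝ} (hc : 0 < c) {x : E}
    (hx : x ≠ 0) :
    ‖iteratedFDeriv ℝ q (fun y : E => ‖y‖ ^ e) (c • x)‖ =
      c ^ (e - q) * ‖iteratedFDeriv ℝ q (fun y : E => ‖y‖ ^ e) x‖ := by
  set w : E → ℝ := fun y => ‖y‖ ^ e
  let L : E ≃L[ℝ] E := ContinuousLinearEquiv.smulLeft (Units.mk0 c hc.ne')
  have hL : ∀ y, L y = c • y := fun y => rfl
  have hwL : w ∘ L = c ^ e • w := by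
    funext y
    simp [w, hL, norm_smul, abs_of_pos hc, mul_zpow]
  have hcomp := L.iteratedFDerivWithin_comp_right w uniqueDiffOn_univ (mem_univ (L x)) q
  rw [preimage_univ, iteratedFDerivWithin_univ, iteratedFDerivWithin_univ, hwL,
    iteratedFDeriv_const_smul_apply (contDiffAt_norm_zpow e hx)] at hcomp
  have hscale : (iteratedFDeriv ℝ q w (L x)).compContinuousLinearMap (fun _ => (L : E →L[ℝ] E)) =
      c ^ q • iteratedFDeriv ℝ q w (L x) := by
    ext v
    simpa [hL] using (iteratedFDeriv ℝ q w (L x)).map_smul_univ (fun _ => c) v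
  rw [hscale, hL] at hcomp
  have := congrArg norm hcomp
  rw [norm_smul, norm_smul, Real.norm_of_nonneg (zpow_pos hc e).le,
    Real.norm_of_nonneg (pow_pos hc q).le] at this
  rw [zpow_sub₀ hc.ne', zpow_natCast, div_mul_eq_mul_div, this,
    mul_div_cancel_left₀ _ (pow_pos hc q).ne']

theorem eventually_norm_iteratedFDeriv_norm_zpow_le [ProperSpace E] (e : ℤ) (N : ℕ) :
    ∀ᶠ C in atTop, ∀ q ≤ N, ∀ x : E, x ≠ 0 →
      ‖iteratedFDeriv ℝ q (fun y : E => ‖y‖ ^ e) x‖ ≤ C * ‖x‖ ^ (e - q) := by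
  refine (eventually_all_finite (finite_Iic N)).2 fun q _ => ?_
  have hcont : ContinuousOn (iteratedFDeriv ℝ q (fun y : E => ‖y‖ ^ e)) (sphere 0 1) :=
    fun v hv => ((contDiffAt_norm_zpow (n := q) e (ne_zero_of_mem_unit_sphere ⟨v, hv⟩)
      ).continuousAt_iteratedFDeriv le_rfl).continuousWithinAt
  obtain ⟨C₀, hC₀⟩ := (isCompact_sphere (0 : E) 1).exists_bound_of_continuousOn hcont
  filter_upwards [eventually_ge_atTop C₀] with C hC x hx
  have hnx : 0 < ‖x‖ := norm_pos_iff.2 hx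
  have hu : ‖x‖⁻¹ • x ∈ sphere (0 : E) 1 := by
    simp [norm_smul, hnx.ne']
  calc ‖iteratedFDeriv ℝ q (fun y : E => ‖y‖ ^ e) x‖
      = ‖x‖ ^ (e - q) * ‖iteratedFDeriv ℝ q (fun y : E => ‖y‖ ^ e) (‖x‖⁻¹ • x)‖ := by
        rw [← norm_iteratedFDeriv_norm_zpow_smul e q hnx (ne_zero_of_mem_unit_sphere ⟨_, hu⟩),
          smul_inv_smul₀ hnx.ne']
    _ ≤ ‖x‖ ^ (e - q) * C := by gcongr; exact (hC₀ _ hu).trans hC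
    _ = C * ‖x‖ ^ (e - q) := mul_comm _ _

theorem norm_iteratedFDerivWithin_norm_zpow_mul_le {g : E → ℝ} {t : Set E} {i : ℕ}
    (hg : ContDiffOn ℝ i g t) (ht : UniqueDiffOn ℝ t) (ht0 : (0 : E) ∉ t) {x : E} (hx : x ∈ t)
    {e β : ℤ} {C b : ℝ}
    (hC : ∀ q ≤ i, ‖iteratedFDeriv ℝ q (fun y : E => ‖y‖ ^ e) x‖ ≤ C * ‖x‖ ^ (e - q))
    (hg' : ∀ q ≤ i, ‖iteratedFDerivWithin ℝ (i - q) g t x‖ ≤ b * ‖x‖ ^ (β + q)) :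
    ‖iteratedFDerivWithin ℝ i (fun y => ‖y‖ ^ e * g y) t x‖ ≤ 2 ^ i * C * b * ‖x‖ ^ (e + β) := by
  have hx0 : x ≠ 0 := ne_of_mem_of_not_mem hx ht0
  refine norm_iteratedFDerivWithin_mul_le_of_zpow
    (fun z hz => (contDiffAt_norm_zpow e (ne_of_mem_of_not_mem hz ht0)).contDiffWithinAt) hg ht
    hx hx0 (fun q hq => ?_) hg'
  rw [iteratedFDerivWithin_eq_iteratedFDeriv ht (contDiffAt_norm_zpow e hx0) hx]
  exact hC q hq

end Weight

section Decay

variable {E F : Type*} [NormedAddCommGroup E] [NormedSpace ℝ E]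
  [NormedAddCommGroup F] [NormedSpace ℝ F]

theorem norm_le_mul_norm_of_tendsto_zero {φ : E → F} {φ' : E → E →L[ℝ] F} {t : Set E} {x : E}
    {M : ℝ} (hx : ∀ c ∈ Ioc (0 : ℝ) 1, c • x ∈ t)
    (hφ : ∀ z ∈ t, HasFDerivWithinAt φ (φ' z) t z)
    (hφ' : ∀ c ∈ Ioc (0 : ℝ) 1, ‖φ' (c • x)‖ ≤ M) (hlim : Tendsto φ (𝓝[t] 0) (𝓝 0)) :
    ‖φ x‖ ≤ M * ‖x‖ := by
  have hM : 0 ≤ M := (norm_nonneg _).trans (hφ' 1 ⟨one_pos, le_rfl⟩)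
  have hseg : ∀ c ∈ Ioc (0 : ℝ) 1, ∀ z ∈ segment ℝ (c • x) x, ∃ d ∈ Ioc (0 : ℝ) 1, z = d • x := by
    rintro c ⟨hc0, hc1⟩ z ⟨a, b, ha, hb, hab, rfl⟩
    refine ⟨a * c + b, ⟨by nlinarith, by nlinarith⟩, ?_⟩
    rw [add_smul, mul_smul]
  have hstep : ∀ c ∈ Ioc (0 : ℝ) 1, ‖φ x - φ (c • x)‖ ≤ M * ‖x‖ := by
    intro c hc
    have hsub : segment ℝ (c • x) x ⊆ t := fun z hz => by
      obtain ⟨d, hd, rfl⟩ := hseg c hc z hz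
      exact hx d hd
    have hmvt := (convex_segment (c • x) x).norm_image_sub_le_of_norm_hasFDerivWithin_le
      (fun z hz => (hφ z (hsub hz)).mono hsub)
      (fun z hz => by obtain ⟨d, hd, rfl⟩ := hseg c hc z hz; exact hφ' d hd)
      (left_mem_segment ℝ _ _) (right_mem_segment ℝ _ _)
    calc ‖φ x - φ (c • x)‖ ≤ M * ‖x - c • x‖ := hmvt
      _ = M * ((1 - c) * ‖x‖) := by
        rw [show x - c • x = (1 - c) • x by rw [sub_smul, one_smul], norm_smul,
          Real.norm_of_nonneg (by linarith [hc.2])]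
      _ ≤ M * ‖x‖ := by gcongr; nlinarith [hc.1, norm_nonneg x]
  have hsmul : Tendsto (fun c : ℝ => c • x) (𝓝[>] 0) (𝓝[t] 0) := by
    refine tendsto_nhdsWithin_iff.2 ⟨?_, ?_⟩
    · simpa using (tendsto_id.smul_const x).mono_left (nhdsWithin_le_nhds (a := (0 : ℝ)))
    · filter_upwards [Ioc_mem_nhdsGT one_pos] with c hc using hx c hc
  have hlim' : Tendsto (fun c : ℝ => ‖φ x - φ (c • x)‖) (𝓝[>] 0) (𝓝 ‖φ x‖) := by
    simpa using ((hlim.comp hsmul).const_sub (φ x)).norm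
  exact le_of_tendsto hlim' (by
    filter_upwards [Ioc_mem_nhdsGT one_pos] with c hc using hstep c hc)

-- `t` may omit the origin, so the vanishing of the lower derivatives there is stated as a limit.
theorem norm_iteratedFDerivWithin_le_mul_norm_pow {h : E → F} {t : Set E} {N : ℕ}
    (hh : ContDiffOn ℝ N h t) (ht : UniqueDiffOn ℝ t)
    (hstar : ∀ x ∈ t, ∀ c ∈ Ioc (0 : ℝ) 1, c • x ∈ t)
    (hlim : ∀ i < N, Tendsto (iteratedFDerivWithin ℝ i h t) (𝓝[t] 0) (𝓝 0))
    {i j : ℕ} (hij : i + j ≤ N) {x : E} (hx : x ∈ t) {B : ℝ}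
    (hB : ∀ z ∈ t, ‖z‖ ≤ ‖x‖ → ‖iteratedFDerivWithin ℝ (i + j) h t z‖ ≤ B) :
    ‖iteratedFDerivWithin ℝ i h t x‖ ≤ B * ‖x‖ ^ j := by
  induction j generalizing i x with
  | zero => simpa using hB x hx le_rfl
  | succ j ih =>
    have hB0 : 0 ≤ B := (norm_nonneg _).trans (hB x hx le_rfl)
    have hderiv : ∀ z ∈ t, HasFDerivWithinAt (iteratedFDerivWithin ℝ i h t)
        (iteratedFDerivWithin ℝ (i + 1) h t z).curryLeft t z := fun z hz =>
      (hh.ftaylorSeriesWithin ht).fderivWithin i (by exact_mod_cast (by omega : i < N)) z hz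
    have hbound : ∀ c ∈ Ioc (0 : ℝ) 1,
        ‖(iteratedFDerivWithin ℝ (i + 1) h t (c • x)).curryLeft‖ ≤ B * ‖x‖ ^ j := by
      intro c hc
      have hcx : ‖c • x‖ ≤ ‖x‖ := by
        rw [norm_smul, Real.norm_of_nonneg hc.1.le]
        exact mul_le_of_le_one_left (norm_nonneg x) hc.2
      rw [ContinuousMultilinearMap.curryLeft_norm]
      calc _ ≤ B * ‖c • x‖ ^ j :=
            ih (by omega) (hstar x hx c hc) fun z hz hzc => by
              rw [add_right_comm, add_assoc]; exact hB z hz (hzc.trans hcx)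
        _ ≤ B * ‖x‖ ^ j := by gcongr
    calc _ ≤ B * ‖x‖ ^ j * ‖x‖ :=
          norm_le_mul_norm_of_tendsto_zero (hstar x hx) hderiv hbound (hlim i (by omega))
      _ = B * ‖x‖ ^ (j + 1) := by ring

end Decay

theorem iteratedFDerivWithin_sdiff_singleton {𝕜 E F : Type*} [NontriviallyNormedField 𝕜]
    [NormedAddCommGroup E] [NormedSpace 𝕜 E] [NormedAddCommGroup F] [NormedSpace 𝕜 F]
    {f : E → F} {s : Set E} {a : E} (ha : a ∈ s) (n : ℕ) :
    iteratedFDerivWithin 𝕜 n f (s \ {a}) = iteratedFDerivWithin 𝕜 n f s := by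
  funext y
  rw [← iteratedFDerivWithin_insert (x := a), insert_sdiff_singleton, insert_eq_of_mem ha]

section Flat

variable {E F : Type*} [NormedAddCommGroup E] [NormedSpace ℝ E]
  [NormedAddCommGroup F] [NormedSpace ℝ F] {r : ℝ} {f : E → F}

theorem uniqueDiffOn_closedBall_zero (hr : 0 < r) : UniqueDiffOn ℝ (closedBall (0 : E) r) :=
  uniqueDiffOn_convex (convex_closedBall 0 r)
    (by rw [interior_closedBall 0 hr.ne']; exact nonempty_ball.2 hr)

theorem uniqueDiffOn_closedBall_sdiff_zero (hr : 0 < r) :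
    UniqueDiffOn ℝ (closedBall (0 : E) r \ {0}) :=
  (uniqueDiffOn_closedBall_zero hr).inter isOpen_compl_singleton

theorem smul_mem_closedBall_zero {x : E} (hx : x ∈ closedBall (0 : E) r) {c : ℝ}
    (hc : c ∈ Ioc (0 : ℝ) 1) : c • x ∈ closedBall (0 : E) r := by
  rw [mem_closedBall_zero_iff, norm_smul, Real.norm_of_nonneg hc.1.le] at *
  nlinarith [hc.2, norm_nonneg x]

theorem tendsto_iteratedFDerivWithin_of_flat {s : Set E} (hs : UniqueDiffOn ℝ s) (h0 : (0 : E) ∈ s)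
    (hf : ContDiffOn ℝ ∞ f s) (hflat : ∀ i : ℕ, iteratedFDerivWithin ℝ i f s 0 = 0) (i : ℕ) :
    Tendsto (iteratedFDerivWithin ℝ i f s) (𝓝[s] 0) (𝓝 0) := by
  simpa [ContinuousWithinAt, hflat i] using
    hf.continuousOn_iteratedFDerivWithin (m := i) ENat.LEInfty.out hs 0 h0

theorem eventually_norm_iteratedFDerivWithin_le_mul_pow_of_flat [ProperSpace E] (hr : 0 < r)
    (hf : ContDiffOn ℝ ∞ f (closedBall 0 r))
    (hflat : ∀ i : ℕ, iteratedFDerivWithin ℝ i f (closedBall 0 r) 0 = 0) (i j : ℕ) :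
    ∀ᶠ M in atTop, ∀ z ∈ closedBall (0 : E) r,
      ‖iteratedFDerivWithin ℝ i f (closedBall 0 r) z‖ ≤ M * ‖z‖ ^ j := by
  have hs := uniqueDiffOn_closedBall_zero (E := E) hr
  obtain ⟨M₀, hM₀⟩ := (isCompact_closedBall (0 : E) r).exists_bound_of_continuousOn
    (hf.continuousOn_iteratedFDerivWithin (m := i + j) ENat.LEInfty.out hs)
  filter_upwards [eventually_ge_atTop M₀] with M hM z hz
  calc _ ≤ M₀ * ‖z‖ ^ j :=
        norm_iteratedFDerivWithin_le_mul_norm_pow (hf.of_le ENat.LEInfty.out) hs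
          (fun x hx c hc => smul_mem_closedBall_zero hx hc)
          (fun i' _ => tendsto_iteratedFDerivWithin_of_flat hs (mem_closedBall_self hr.le) hf
            hflat i')
          le_rfl hz fun z' hz' _ => hM₀ z' hz'
    _ ≤ M * ‖z‖ ^ j := by gcongr

end Flat

section WeightedFlat

variable {E : Type*} [NormedAddCommGroup E] [InnerProductSpace ℝ E] {r : ℝ} {f : E → ℝ}

theorem norm_iteratedFDerivWithin_norm_zpow_neg_mul_le (hr : 0 < r)
    (hf : ContDiffOn ℝ ∞ f (closedBall 0 r))
    (hflat : ∀ i : ℕ, iteratedFDerivWithin ℝ i f (closedBall 0 r) 0 = 0) {n k : ℕ} {A C : ℝ}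
    (hA : ∀ i ≤ n, ∀ z ∈ closedBall (0 : E) r,
      ‖iteratedFDerivWithin ℝ i f (closedBall 0 r) z‖ ≤ A * ‖z‖ ^ k)
    (hC : ∀ q ≤ n, ∀ x : E, x ≠ 0 →
      ‖iteratedFDeriv ℝ q (fun y : E => ‖y‖ ^ (-(k : ℤ))) x‖ ≤ C * ‖x‖ ^ (-(k : ℤ) - q))
    {i : ℕ} (hi : i ≤ n) {x : E} (hx : x ∈ closedBall (0 : E) r \ {0}) :
    ‖iteratedFDerivWithin ℝ i (fun y : E => ‖y‖ ^ (-(k : ℤ)) * f y) (closedBall 0 r) x‖ ≤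
      2 ^ i * C * A := by
  have hs := uniqueDiffOn_closedBall_zero (E := E) hr
  have hnx : 0 < ‖x‖ := norm_pos_iff.2 hx.2
  have hA0 : 0 ≤ A := nonneg_of_mul_nonneg_left
    ((norm_nonneg _).trans (hA 0 (Nat.zero_le n) x hx.1)) (pow_pos hnx k)
  have hdecay : ∀ q ≤ i, ‖iteratedFDerivWithin ℝ (i - q) f (closedBall 0 r \ {0}) x‖ ≤
      A * ‖x‖ ^ ((k : ℤ) + q) := fun q hq => by
    rw [iteratedFDerivWithin_sdiff_singleton (mem_closedBall_self hr.le), zpow_add₀ hnx.ne',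
      zpow_natCast, zpow_natCast, ← mul_assoc]
    refine norm_iteratedFDerivWithin_le_mul_norm_pow (N := n) (hf.of_le ENat.LEInfty.out)
      hs (fun y hy c hc => smul_mem_closedBall_zero hy hc)
      (fun i' _ => tendsto_iteratedFDerivWithin_of_flat hs (mem_closedBall_self hr.le) hf hflat i')
      (by omega) hx.1 fun z hz hzx => ?_
    rw [Nat.sub_add_cancel hq]
    exact (hA i hi z hz).trans (by gcongr)
  rw [← iteratedFDerivWithin_sdiff_singleton (mem_closedBall_self hr.le)]
  simpa using norm_iteratedFDerivWithin_norm_zpow_mul_le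
    ((hf.mono sdiff_subset).of_le ENat.LEInfty.out) (uniqueDiffOn_closedBall_sdiff_zero hr)
    (fun h => h.2 rfl) hx (fun q hq => hC q (hq.trans hi) x hx.2) hdecay

theorem tendsto_iteratedFDerivWithin_norm_zpow_neg_mul [ProperSpace E] (hr : 0 < r)
    (hf : ContDiffOn ℝ ∞ f (closedBall 0 r))
    (hflat : ∀ i : ℕ, iteratedFDerivWithin ℝ i f (closedBall 0 r) 0 = 0) (k i : ℕ) :
    Tendsto (iteratedFDerivWithin ℝ i (fun y : E => ‖y‖ ^ (-(k : ℤ)) * f y)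
      (closedBall 0 r \ {0})) (𝓝[closedBall 0 r \ {0}] 0) (𝓝 0) := by
  obtain ⟨K, hwK, hfK⟩ := ((eventually_norm_iteratedFDeriv_norm_zpow_le (E := E) (-(k : ℤ)) i).and
    ((eventually_all_finite (finite_Iic i)).2 fun q _ =>
      eventually_norm_iteratedFDerivWithin_le_mul_pow_of_flat hr hf hflat (i - q)
        (k + 1 + q))).exists
  have hbound : ∀ z ∈ closedBall (0 : E) r \ {0}, ‖iteratedFDerivWithin ℝ i
      (fun y : E => ‖y‖ ^ (-(k : ℤ)) * f y) (closedBall 0 r \ {0}) z‖ ≤ 2 ^ i * K * K * ‖z‖ := by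
    intro z hz
    simpa using norm_iteratedFDerivWithin_norm_zpow_mul_le (β := k + 1)
      ((hf.mono sdiff_subset).of_le ENat.LEInfty.out)
      (uniqueDiffOn_closedBall_sdiff_zero hr) (fun h => h.2 rfl) hz
      (fun q hq => hwK q hq z hz.2) fun q hq => by
        rw [iteratedFDerivWithin_sdiff_singleton (mem_closedBall_self hr.le)]
        exact (hfK q hq z hz.1).trans_eq (by norm_cast)
  refine squeeze_zero_norm' (eventually_nhdsWithin_of_forall hbound) ?_
  simpa using ((tendsto_norm_zero (E := E)).mono_left nhdsWithin_le_nhds).const_mul (2 ^ i * K * K)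

theorem norm_iteratedFDerivWithin_le_of_norm_zpow_neg_mul_le [ProperSpace E] (hr : 0 < r)
    (hf : ContDiffOn ℝ ∞ f (closedBall 0 r))
    (hflat : ∀ i : ℕ, iteratedFDerivWithin ℝ i f (closedBall 0 r) 0 = 0) {n k : ℕ} {B C : ℝ}
    (hB : ∀ i ≤ n, ∀ z ∈ closedBall (0 : E) r \ {0}, ‖iteratedFDerivWithin ℝ i
      (fun y : E => ‖y‖ ^ (-(k : ℤ)) * f y) (closedBall 0 r) z‖ ≤ B)
    (hC : ∀ q ≤ n, ∀ x : E, x ≠ 0 →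
      ‖iteratedFDeriv ℝ q (fun y : E => ‖y‖ ^ (k : ℤ)) x‖ ≤ C * ‖x‖ ^ ((k : ℤ) - q))
    {i : ℕ} (hi : i ≤ n) {x : E} (hx : x ∈ closedBall (0 : E) r \ {0}) :
    ‖iteratedFDerivWithin ℝ i f (closedBall 0 r) x‖ ≤ 2 ^ i * C * B * ‖x‖ ^ k := by
  set t := closedBall (0 : E) r \ {0}
  have ht := uniqueDiffOn_closedBall_sdiff_zero (E := E) hr
  have hg : ContDiffOn ℝ ∞ (fun y : E => ‖y‖ ^ (-(k : ℤ)) * f y) t := fun z hz =>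
    (contDiffAt_norm_zpow _ hz.2).contDiffWithinAt.mul (hf.mono sdiff_subset z hz)
  have hsplit : EqOn (fun y : E => ‖y‖ ^ (k : ℤ) * (‖y‖ ^ (-(k : ℤ)) * f y)) f t := fun z hz => by
    simp only [← mul_assoc, ← zpow_add₀ (norm_ne_zero_iff.2 hz.2), add_neg_cancel, zpow_zero,
      one_mul]
  rw [← iteratedFDerivWithin_sdiff_singleton (mem_closedBall_self hr.le),
    ← iteratedFDerivWithin_congr hsplit hx]
  simpa using norm_iteratedFDerivWithin_norm_zpow_mul_le (β := 0) (hg.of_le ENat.LEInfty.out)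
    ht (fun h => h.2 rfl) hx (fun q hq => hC q (hq.trans hi) x hx.2) fun q hq => by
      rw [zero_add, zpow_natCast]
      refine norm_iteratedFDerivWithin_le_mul_norm_pow (N := n) (hg.of_le ENat.LEInfty.out)
        ht (fun y hy c hc => ⟨smul_mem_closedBall_zero hy.1 hc, smul_ne_zero hc.1.ne' hy.2⟩)
        (fun i' _ => tendsto_iteratedFDerivWithin_norm_zpow_neg_mul hr hf hflat k i')
        (by omega) hx fun z hz _ => ?_
      rw [Nat.sub_add_cancel hq, iteratedFDerivWithin_sdiff_singleton (mem_closedBall_self hr.le)]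
      exact hB i hi z hz

end WeightedFlat

section Norms

variable {m n k : ℕ} {r : ℝ} {f : EuclideanSpace ℝ (Fin m) → ℝ}

theorem flatNorm_nonneg : 0 ≤ flatNorm m r n k f :=
  Real.iSup_nonneg fun _ => by positivity

theorem weightedCnNorm_nonneg : 0 ≤ weightedCnNorm m r n k f := by
  unfold weightedCnNorm
  exact Real.iSup_nonneg fun _ => norm_nonneg _

theorem norm_iteratedFDerivWithin_le_flatNorm_mul (hr : 0 < r)
    (hf : ContDiffOn ℝ ∞ f (closedBall 0 r))
    (hflat : ∀ i : ℕ, iteratedFDerivWithin ℝ i f (closedBall 0 r) 0 = 0) {i : ℕ} (hi : i ≤ n)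
    {z : EuclideanSpace ℝ (Fin m)} (hz : z ∈ closedBall 0 r) :
    ‖iteratedFDerivWithin ℝ i f (closedBall 0 r) z‖ ≤ flatNorm m r n k f * ‖z‖ ^ k := by
  rcases eq_or_ne z 0 with rfl | hz0
  · rw [hflat i, norm_zero]
    exact mul_nonneg flatNorm_nonneg (by positivity)
  have hnz : ‖z‖ ≠ 0 := norm_ne_zero_iff.2 hz0
  obtain ⟨M, hM⟩ := (eventually_all.2 fun j : Fin (n + 1) =>
    eventually_norm_iteratedFDerivWithin_le_mul_pow_of_flat hr hf hflat j k).exists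
  have hle : ‖z‖ ^ (-(k : ℤ)) * ‖iteratedFDerivWithin ℝ i f (closedBall 0 r) z‖ ≤
      flatNorm m r n k f := by
    unfold flatNorm
    refine le_ciSup (f := fun p : (closedBall (0 : EuclideanSpace ℝ (Fin m)) r \ {0} : Set _) ×
      Fin (n + 1) => ‖(p.1 : EuclideanSpace ℝ (Fin m))‖ ^ (-(k : ℤ)) *
        ‖iteratedFDerivWithin ℝ p.2 f (closedBall 0 r) p.1‖)
      ⟨M, forall_mem_range.2 fun ⟨⟨x, hx⟩, j⟩ => ?_⟩ ⟨⟨z, hz, hz0⟩, ⟨i, by omega⟩⟩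
    calc _ ≤ ‖x‖ ^ (-(k : ℤ)) * (M * ‖x‖ ^ k) := by gcongr; exact hM j x hx.1
      _ = M := by
        rw [zpow_neg, zpow_natCast, mul_left_comm,
          inv_mul_cancel₀ (pow_ne_zero _ (norm_ne_zero_iff.2 hx.2)), mul_one]
  calc _ = ‖z‖ ^ k * (‖z‖ ^ (-(k : ℤ)) * ‖iteratedFDerivWithin ℝ i f (closedBall 0 r) z‖) := by
        rw [zpow_neg, zpow_natCast, ← mul_assoc, mul_inv_cancel₀ (pow_ne_zero _ hnz), one_mul]
    _ ≤ flatNorm m r n k f * ‖z‖ ^ k := by rw [mul_comm]; gcongr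

theorem norm_iteratedFDerivWithin_norm_zpow_neg_mul_le_flatNorm (hr : 0 < r)
    (hf : ContDiffOn ℝ ∞ f (closedBall 0 r))
    (hflat : ∀ i : ℕ, iteratedFDerivWithin ℝ i f (closedBall 0 r) 0 = 0) {C : ℝ} (hC0 : 0 ≤ C)
    (hC : ∀ q ≤ n, ∀ x : EuclideanSpace ℝ (Fin m), x ≠ 0 →
      ‖iteratedFDeriv ℝ q (fun y : EuclideanSpace ℝ (Fin m) => ‖y‖ ^ (-(k : ℤ))) x‖ ≤
        C * ‖x‖ ^ (-(k : ℤ) - q))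
    {i : ℕ} (hi : i ≤ n) {x : EuclideanSpace ℝ (Fin m)} (hx : x ∈ closedBall 0 r \ {0}) :
    ‖iteratedFDerivWithin ℝ i (fun y : EuclideanSpace ℝ (Fin m) => ‖y‖ ^ (-(k : ℤ)) * f y)
      (closedBall 0 r) x‖ ≤ 2 ^ n * C * flatNorm m r n k f :=
  (norm_iteratedFDerivWithin_norm_zpow_neg_mul_le hr hf hflat
    (fun _ hj _ hz => norm_iteratedFDerivWithin_le_flatNorm_mul hr hf hflat hj hz) hC hi hx).trans
    (mul_le_mul_of_nonneg_right (by gcongr; norm_num) flatNorm_nonneg)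

theorem weightedCnNorm_le_flatNorm (hr : 0 < r) (hf : ContDiffOn ℝ ∞ f (closedBall 0 r))
    (hflat : ∀ i : ℕ, iteratedFDerivWithin ℝ i f (closedBall 0 r) 0 = 0) {C : ℝ} (hC0 : 0 ≤ C)
    (hC : ∀ q ≤ n, ∀ x : EuclideanSpace ℝ (Fin m), x ≠ 0 →
      ‖iteratedFDeriv ℝ q (fun y : EuclideanSpace ℝ (Fin m) => ‖y‖ ^ (-(k : ℤ))) x‖ ≤
        C * ‖x‖ ^ (-(k : ℤ) - q)) :
    weightedCnNorm m r n k f ≤ 2 ^ n * C * flatNorm m r n k f :=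
  Real.iSup_le (fun p => norm_iteratedFDerivWithin_norm_zpow_neg_mul_le_flatNorm hr hf hflat hC0 hC
    (Nat.lt_succ_iff.1 p.2.2) p.1.2) (mul_nonneg (by positivity) flatNorm_nonneg)

theorem norm_iteratedFDerivWithin_le_weightedCnNorm (hr : 0 < r)
    (hf : ContDiffOn ℝ ∞ f (closedBall 0 r))
    (hflat : ∀ i : ℕ, iteratedFDerivWithin ℝ i f (closedBall 0 r) 0 = 0) {i : ℕ} (hi : i ≤ n)
    {z : EuclideanSpace ℝ (Fin m)} (hz : z ∈ closedBall 0 r \ {0}) :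
    ‖iteratedFDerivWithin ℝ i (fun y : EuclideanSpace ℝ (Fin m) => ‖y‖ ^ (-(k : ℤ)) * f y)
      (closedBall 0 r) z‖ ≤ weightedCnNorm m r n k f := by
  obtain ⟨C, hC0, hC⟩ := ((eventually_ge_atTop 0).and
    (eventually_norm_iteratedFDeriv_norm_zpow_le (E := EuclideanSpace ℝ (Fin m)) (-k) n)).exists
  unfold weightedCnNorm
  exact le_ciSup (f := fun p : (closedBall (0 : EuclideanSpace ℝ (Fin m)) r \ {0} : Set _) ×
      Fin (n + 1) => ‖iteratedFDerivWithin ℝ p.2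
        (fun y : EuclideanSpace ℝ (Fin m) => ‖y‖ ^ (-(k : ℤ)) * f y) (closedBall 0 r) p.1‖)
    ⟨_, forall_mem_range.2 fun p => norm_iteratedFDerivWithin_norm_zpow_neg_mul_le_flatNorm hr hf
      hflat hC0 hC (Nat.lt_succ_iff.1 p.2.2) p.1.2⟩ ⟨⟨z, hz⟩, ⟨i, by omega⟩⟩

theorem flatNorm_le_weightedCnNorm (hr : 0 < r) (hf : ContDiffOn ℝ ∞ f (closedBall 0 r))
    (hflat : ∀ i : ℕ, iteratedFDerivWithin ℝ i f (closedBall 0 r) 0 = 0) {C : ℝ} (hC0 : 0 ≤ C)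
    (hC : ∀ q ≤ n, ∀ x : EuclideanSpace ℝ (Fin m), x ≠ 0 →
      ‖iteratedFDeriv ℝ q (fun y : EuclideanSpace ℝ (Fin m) => ‖y‖ ^ (k : ℤ)) x‖ ≤
        C * ‖x‖ ^ ((k : ℤ) - q)) :
    flatNorm m r n k f ≤ 2 ^ n * C * weightedCnNorm m r n k f := by
  refine Real.iSup_le (fun ⟨⟨x, hx⟩, i⟩ => ?_) (mul_nonneg (by positivity) weightedCnNorm_nonneg)
  have hnx : ‖x‖ ^ k ≠ 0 := pow_ne_zero _ (norm_ne_zero_iff.2 hx.2)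
  calc _ ≤ ‖x‖ ^ (-(k : ℤ)) * (2 ^ (i : ℕ) * C * weightedCnNorm m r n k f * ‖x‖ ^ k) := by
        gcongr
        exact norm_iteratedFDerivWithin_le_of_norm_zpow_neg_mul_le hr hf hflat
          (fun _ hj _ hz => norm_iteratedFDerivWithin_le_weightedCnNorm hr hf hflat hj hz) hC
          (Nat.lt_succ_iff.1 i.2) hx
    _ = 2 ^ (i : ℕ) * C * weightedCnNorm m r n k f := by
        rw [zpow_neg, zpow_natCast, mul_left_comm, inv_mul_cancel₀ hnx, mul_one]
    _ ≤ 2 ^ n * C * weightedCnNorm m r n k f :=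
        mul_le_mul_of_nonneg_right (by gcongr; exacts [one_le_two, Nat.lt_succ_iff.1 i.2])
          weightedCnNorm_nonneg

end Norms

/-- for all `m ≥ 1`, `n k : ℕ` and `r > 0` there is `C > 0` such that for
every smooth `f` on `B̄_r` flat at the origin,
`C⁻¹ |f|_{n,k,r} ≤ ⟨f⟩_{n,k,r} ≤ C |f|_{n,k,r}`. -/
theorem flatNorm_equiv_weightedCnNorm :
    ∀ m : ℕ, 1 ≤ m → ∀ n k : ℕ, ∀ r : ℝ, 0 < r →
      ∃ C > (0 : ℝ), ∀ f : EuclideanSpace ℝ (Fin m) → ℝ,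
        ContDiffOn ℝ (⊤ : ℕ∞) f (closedBall 0 r) →
        (∀ i : ℕ, iteratedFDerivWithin ℝ i f (closedBall 0 r) 0 = 0) →
        C⁻¹ * weightedCnNorm m r n k f ≤ flatNorm m r n k f ∧
        flatNorm m r n k f ≤ C * weightedCnNorm m r n k f := by
  intro m _ n k r hr
  obtain ⟨C, hC0, hCk, hC_k⟩ := ((eventually_gt_atTop 0).and
    ((eventually_norm_iteratedFDeriv_norm_zpow_le (E := EuclideanSpace ℝ (Fin m)) k n).and
      (eventually_norm_iteratedFDeriv_norm_zpow_le (E := EuclideanSpace ℝ (Fin m)) (-k) n))).exists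
  refine ⟨2 ^ n * C, by positivity, fun f hf hflat => ⟨?_, ?_⟩⟩
  · rw [inv_mul_le_iff₀ (by positivity)]
    exact weightedCnNorm_le_flatNorm hr hf hflat hC0.le hC_k
  · exact flatNorm_le_weightedCnNorm hr hf hflat hC0.le hCk
end

section
/- For every m ≥ 1, r > 0, and all n, k, j₁, j₂ ∈ ℕ with j₁ ≤ k and j₁ + j₂ > 0, there exists a constant C = C(n,k,j₁,j₂,r) > 0 such that for every smooth function f on B̄_r ⊂ ℝ^m that is flat at the origin, ⟨f⟩_{n,k,r} ≤ C · ⟨f⟩_{n,k−j₁,r}^{j₂/(j₁+j₂)} · ⟨f⟩_{n,k+j₂,r}^{j₁/(j₁+j₂)} (interpolation inequality in the weight index). -/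
open Metric Set

/-! Each weighted norm is a supremum of the pointwise quantities `|x|^{-k} |D^a f(x)|`, and for
fixed `(x, a)` the quantity with weight `k` is exactly the weighted geometric mean, with weights
`j₂/(j₁+j₂)` and `j₁/(j₁+j₂)`, of those with weights `k - j₁` and `k + j₂`. Taking suprema gives
the inequality with `C = 1`. The suprema are finite because, by the mean value inequality and
induction, every derivative of a flat function is `O(|x|^K)` for every `K`. -/

section FlatBound

variable {E F : Type*} [NormedAddCommGroup E] [NormedSpace ℝ E]
  [NormedAddCommGroup F] [NormedSpace ℝ F]

theorem norm_le_mul_norm_pow_succ_of_hasFDerivWithinAt {g : E → F} {g' : E → E →L[ℝ] F}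
    {r C : ℝ} {K : ℕ} (hC : 0 ≤ C)
    (hg : ∀ y ∈ closedBall (0 : E) r, HasFDerivWithinAt g (g' y) (closedBall 0 r) y)
    (hg0 : g 0 = 0) (hg' : ∀ y ∈ closedBall (0 : E) r, ‖g' y‖ ≤ C * ‖y‖ ^ K)
    {x : E} (hx : x ∈ closedBall (0 : E) r) :
    ‖g x‖ ≤ C * ‖x‖ ^ (K + 1) := by
  have hsub : closedBall (0 : E) ‖x‖ ⊆ closedBall 0 r :=
    closedBall_subset_closedBall (mem_closedBall_zero_iff.1 hx)
  have hbound : ∀ y ∈ closedBall (0 : E) ‖x‖, ‖g' y‖ ≤ C * ‖x‖ ^ K := fun y hy =>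
    (hg' y (hsub hy)).trans (by gcongr; exact mem_closedBall_zero_iff.1 hy)
  have hmvt := (convex_closedBall (0 : E) ‖x‖).norm_image_sub_le_of_norm_hasFDerivWithin_le
    (fun y hy => (hg y (hsub hy)).mono hsub) hbound (mem_closedBall_self (norm_nonneg x))
    (mem_closedBall_zero_iff.2 le_rfl)
  rw [hg0, sub_zero, sub_zero] at hmvt
  rwa [pow_succ, ← mul_assoc]

theorem exists_norm_iteratedFDerivWithin_le_mul_norm_pow [ProperSpace E] {f : E → F} {r : ℝ}
    (hr : 0 < r) (hf : ContDiffOn ℝ (⊤ : ℕ∞) f (closedBall 0 r))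
    (hflat : ∀ i : ℕ, iteratedFDerivWithin ℝ i f (closedBall 0 r) 0 = 0) (K i : ℕ) :
    ∃ C, 0 ≤ C ∧ ∀ x ∈ closedBall (0 : E) r,
      ‖iteratedFDerivWithin ℝ i f (closedBall 0 r) x‖ ≤ C * ‖x‖ ^ K := by
  have hU : UniqueDiffOn ℝ (closedBall (0 : E) r) :=
    uniqueDiffOn_convex (convex_closedBall 0 r)
      ⟨0, ball_subset_interior_closedBall (mem_ball_self hr)⟩
  induction K generalizing i with
  | zero =>
    obtain ⟨C, hC⟩ := (isCompact_closedBall (0 : E) r).exists_bound_of_continuousOn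
      (hf.continuousOn_iteratedFDerivWithin (m := i) (by exact_mod_cast le_top) hU)
    exact ⟨max C 0, le_max_right _ _, fun x hx => by
      rw [pow_zero, mul_one]; exact (hC x hx).trans (le_max_left _ _)⟩
  | succ K ih =>
    obtain ⟨C, hC0, hC⟩ := ih (i + 1)
    have hdiff := hf.differentiableOn_iteratedFDerivWithin (m := i)
      (by exact_mod_cast WithTop.coe_lt_top i) hU
    refine ⟨C, hC0, fun x hx => norm_le_mul_norm_pow_succ_of_hasFDerivWithinAt hC0
      (fun y hy => (hdiff y hy).hasFDerivWithinAt) (hflat i) (fun y hy => ?_) hx⟩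
    rw [norm_fderivWithin_iteratedFDerivWithin]
    exact hC y hy

end FlatBound

theorem zpow_neg_mul_eq_rpow_mul_rpow {t d θ η : ℝ} (ht : 0 < t) (hd : 0 ≤ d) {a b k : ℤ}
    (hθη : θ + η = 1) (hk : (a : ℝ) * θ + b * η = k) :
    t ^ (-k) * d = (t ^ (-a) * d) ^ θ * (t ^ (-b) * d) ^ η := by
  rw [Real.mul_rpow (zpow_nonneg ht.le _) hd, Real.mul_rpow (zpow_nonneg ht.le _) hd,
    mul_mul_mul_comm, ← Real.rpow_add' hd (by rw [hθη]; norm_num), hθη, Real.rpow_one,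
    ← Real.rpow_intCast, ← Real.rpow_intCast, ← Real.rpow_intCast, ← Real.rpow_mul ht.le,
    ← Real.rpow_mul ht.le, ← Real.rpow_add ht]
  congr 2
  push_cast
  linarith

theorem iSup_le_iSup_rpow_mul_iSup_rpow {ι : Sort*} {f g h : ι → ℝ} {θ η : ℝ}
    (hθ : 0 ≤ θ) (hη : 0 ≤ η) (hg0 : ∀ i, 0 ≤ g i) (hh0 : ∀ i, 0 ≤ h i)
    (hg : BddAbove (range g)) (hh : BddAbove (range h))
    (hfgh : ∀ i, f i ≤ g i ^ θ * h i ^ η) :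
    ⨆ i, f i ≤ (⨆ i, g i) ^ θ * (⨆ i, h i) ^ η := by
  have hsup_g := Real.iSup_nonneg hg0
  have hsup_h := Real.iSup_nonneg hh0
  refine Real.iSup_le (fun i => (hfgh i).trans ?_) (by positivity)
  exact mul_le_mul (Real.rpow_le_rpow (hg0 i) (le_ciSup hg i) hθ)
    (Real.rpow_le_rpow (hh0 i) (le_ciSup hh i) hη) (Real.rpow_nonneg (hh0 i) _) (by positivity)

noncomputable def flatWeight (m : ℕ) (r : ℝ) (n k : ℕ) (f : EuclideanSpace ℝ (Fin m) → ℝ)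
    (p : (closedBall (0 : EuclideanSpace ℝ (Fin m)) r \ {0} :
      Set (EuclideanSpace ℝ (Fin m))) × Fin (n + 1)) : ℝ :=
  ‖(p.1 : EuclideanSpace ℝ (Fin m))‖ ^ (-(k : ℤ)) *
    ‖iteratedFDerivWithin ℝ p.2 f (closedBall 0 r) p.1‖

section FlatWeight

variable {m : ℕ} {r : ℝ} {n : ℕ} {f : EuclideanSpace ℝ (Fin m) → ℝ}

theorem flatWeight_nonneg (k : ℕ) (p) : 0 ≤ flatWeight m r n k f p := by
  unfold flatWeight; positivity

theorem bddAbove_range_flatWeight (hr : 0 < r) (hf : ContDiffOn ℝ (⊤ : ℕ∞) f (closedBall 0 r))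
    (hflat : ∀ i : ℕ, iteratedFDerivWithin ℝ i f (closedBall 0 r) 0 = 0) (k : ℕ) :
    BddAbove (range (flatWeight m r n k f)) := by
  choose C hC0 hC using fun i : Fin (n + 1) =>
    exists_norm_iteratedFDerivWithin_le_mul_norm_pow hr hf hflat k i
  refine ⟨∑ i, C i, forall_mem_range.2 fun ⟨⟨x, hxB, hx0⟩, i⟩ => ?_⟩
  have hx : 0 < ‖x‖ := norm_pos_iff.2 hx0
  calc flatWeight m r n k f ⟨⟨x, hxB, hx0⟩, i⟩
      = (‖x‖ ^ k)⁻¹ * ‖iteratedFDerivWithin ℝ i f (closedBall 0 r) x‖ := by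
        rw [flatWeight, zpow_neg, zpow_natCast]
    _ ≤ C i := by
        rw [inv_mul_le_iff₀ (by positivity), mul_comm]
        exact hC i x hxB
    _ ≤ ∑ i, C i := Finset.single_le_sum (fun j _ => hC0 j) (Finset.mem_univ i)

theorem flatWeight_eq_rpow_mul_rpow {k j₁ j₂ : ℕ} (hj₁ : j₁ ≤ k) (hj : 0 < j₁ + j₂) (p) :
    flatWeight m r n k f p =
      flatWeight m r n (k - j₁) f p ^ ((j₂ : ℝ) / ((j₁ : ℝ) + (j₂ : ℝ))) *
        flatWeight m r n (k + j₂) f p ^ ((j₁ : ℝ) / ((j₁ : ℝ) + (j₂ : ℝ))) := by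
  have hj' : (0 : ℝ) < (j₁ : ℝ) + (j₂ : ℝ) := by exact_mod_cast hj
  refine zpow_neg_mul_eq_rpow_mul_rpow (norm_pos_iff.2 p.1.2.2) (norm_nonneg _) ?_ ?_
  · field_simp; ring
  · push_cast [Nat.cast_sub hj₁]
    field_simp
    ring

end FlatWeight

theorem interpolation_weights_general (m : ℕ) (r : ℝ) (hr : 0 < r)
    (n k j₁ j₂ : ℕ) (hj₁ : j₁ ≤ k) (hj : 0 < j₁ + j₂) :
    ∃ C > (0 : ℝ), ∀ f : EuclideanSpace ℝ (Fin m) → ℝ,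
      ContDiffOn ℝ (⊤ : ℕ∞) f (closedBall 0 r) →
      (∀ i : ℕ, iteratedFDerivWithin ℝ i f (closedBall 0 r) 0 = 0) →
      flatNorm m r n k f ≤
        C * flatNorm m r n (k - j₁) f ^ ((j₂ : ℝ) / ((j₁ : ℝ) + (j₂ : ℝ))) *
          flatNorm m r n (k + j₂) f ^ ((j₁ : ℝ) / ((j₁ : ℝ) + (j₂ : ℝ))) := by
  refine ⟨1, one_pos, fun f hf hflat => ?_⟩
  rw [one_mul]
  exact iSup_le_iSup_rpow_mul_iSup_rpow (by positivity) (by positivity)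
    (flatWeight_nonneg _) (flatWeight_nonneg _) (bddAbove_range_flatWeight hr hf hflat _)
    (bddAbove_range_flatWeight hr hf hflat _) (fun p => (flatWeight_eq_rpow_mul_rpow hj₁ hj p).le)

/-- interpolation inequality in the weight index: for `j₁ ≤ k`,
`j₁ + j₂ > 0`, there is `C > 0` with
`⟨f⟩_{n,k,r} ≤ C ⟨f⟩_{n,k−j₁,r}^{j₂/(j₁+j₂)} ⟨f⟩_{n,k+j₂,r}^{j₁/(j₁+j₂)}`
for every smooth `f` on `B̄_r` flat at the origin. -/
theorem interpolation_weights (m : ℕ) (hm : 1 ≤ m) (r : ℝ) (hr : 0 < r)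
    (n k j₁ j₂ : ℕ) (hj₁ : j₁ ≤ k) (hj : 0 < j₁ + j₂) :
    ∃ C > (0 : ℝ), ∀ f : EuclideanSpace ℝ (Fin m) → ℝ,
      ContDiffOn ℝ (⊤ : ℕ∞) f (closedBall 0 r) →
      (∀ i : ℕ, iteratedFDerivWithin ℝ i f (closedBall 0 r) 0 = 0) →
      flatNorm m r n k f ≤
        C * flatNorm m r n (k - j₁) f ^ ((j₂ : ℝ) / ((j₁ : ℝ) + (j₂ : ℝ))) *
          flatNorm m r n (k + j₂) f ^ ((j₁ : ℝ) / ((j₁ : ℝ) + (j₂ : ℝ))) :=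
  interpolation_weights_general m r hr n k j₁ j₂ hj₁ hj
end
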